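/- arXiv:2203.03023 — 6 statements merged into one kernel-verified Lean document; each statement's English description precedes it below -/
import Mathlib

section
/- Let R be a commutative ring, let n ≥ 1, let a₁, …, aₙ ∈ R and t ∈ R, and let f = a₁x + a₂x² + ⋯ + aₙxⁿ be a formal power series over R. Then Σ_{k=0}^{n} (−1)^{n+k} t^k · ([xⁿ] f(x)^k) = det Mₙ(t), where Mₙ(t) is the n×n matrix whose (i,j) entry (for 1 ≤ i, j ≤ n) equals a_{i−j+1}·t if j ≤ i, equals 1 if j = i+1, and equals 0 if j > i+1. -/
/-!
Write `g = t f`. Laplace expansion of `det Mₘ₊₁` along its first row, which has only two nonzero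
entries, gives `det Mₘ₊₁ = ∑_{i+j=m} (-1)^i gᵢ₊₁ det Mⱼ`; this is precisely the statement that
`D = ∑ₘ (-1)^m det Mₘ xᵐ` satisfies `(1 + g) D = 1`. Since `g` has no constant term,
`∑_{k ≤ m} (-g)^k = D (1 - (-g)^{m+1})` agrees with `D` up to degree `m`, which is the theorem.
-/

open PowerSeries Finset

section

variable {R : Type*} [CommRing R]

/-- With `b = c` this is the matrix `Mₙ` of the theorem for the sequence `c`; the free first column
`b` is what lets a Laplace expansion along the first row close up into an induction. -/
def hessenbergMatrix (b c : ℕ → R) (n : ℕ) : Matrix (Fin n) (Fin n) R :=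
  Matrix.of fun i j =>
    if (j : ℕ) = 0 then b (i + 1)
    else if (j : ℕ) ≤ i then c (i - j + 1)
    else if (j : ℕ) = i + 1 then 1 else 0

namespace hessenbergMatrix

variable (b c : ℕ → R)

theorem submatrix_succ_succ (n : ℕ) :
    (hessenbergMatrix b c (n + 1)).submatrix Fin.succ Fin.succ = hessenbergMatrix c c n := by
  ext i j
  simp only [hessenbergMatrix, Matrix.submatrix_apply, Matrix.of_apply, Fin.val_succ,
    Nat.add_sub_add_right, Nat.add_right_cancel_iff, Nat.add_le_add_iff_right, Nat.add_eq_zero_iff,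
    one_ne_zero, and_false, if_false]
  split_ifs <;> first | rfl | omega | (congr 1; omega)

theorem submatrix_succ_succAbove_one (n : ℕ) :
    (hessenbergMatrix b c (n + 2)).submatrix Fin.succ (Fin.succAbove 1) =
      hessenbergMatrix (fun i => b (i + 1)) c (n + 1) := by
  ext i j
  cases j using Fin.cases with
  | zero => simp [hessenbergMatrix]
  | succ j =>
    have hcol : ((1 : Fin (n + 2)).succAbove j.succ : ℕ) = j + 2 := by
      simp [Fin.succAbove, Fin.lt_def]
    simp only [hessenbergMatrix, Matrix.submatrix_apply, Matrix.of_apply, Fin.val_succ, hcol]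
    split_ifs <;> first | rfl | omega | (congr 1; omega)

theorem det_succ_succ (n : ℕ) :
    (hessenbergMatrix b c (n + 2)).det =
      b 1 * (hessenbergMatrix c c (n + 1)).det -
        (hessenbergMatrix (fun i => b (i + 1)) c (n + 1)).det := by
  rw [Matrix.det_succ_row_zero, Fin.sum_univ_succ, Fin.sum_univ_succ, Fin.succAbove_zero,
    submatrix_succ_succ, Fin.succ_zero_eq_one, submatrix_succ_succAbove_one]
  simp [hessenbergMatrix]
  ring

theorem det_succ (n : ℕ) :
    (hessenbergMatrix b c (n + 1)).det =
      ∑ p ∈ antidiagonal n, (-1) ^ p.1 * b (p.1 + 1) * (hessenbergMatrix c c p.2).det := by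
  induction n generalizing b with
  | zero => simp [hessenbergMatrix]
  | succ n ih =>
    rw [det_succ_succ, ih (fun i => b (i + 1)), Nat.sum_antidiagonal_succ]
    simp [pow_succ, sum_neg_distrib, sub_eq_add_neg]

end hessenbergMatrix

theorem one_add_mul_mk_det_hessenbergMatrix {g : R⟦X⟧} (hg : constantCoeff g = 0) :
    (1 + g) * mk (fun m => (-1) ^ m * (hessenbergMatrix (coeff · g) (coeff · g) m).det) = 1 := by
  ext m
  cases m with
  | zero => simp [hg, hessenbergMatrix]
  | succ n =>
    rw [add_mul, one_mul, map_add, coeff_mul, Nat.sum_antidiagonal_succ,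
      coeff_zero_eq_constantCoeff, hg, coeff_mk, hessenbergMatrix.det_succ, mul_sum, coeff_one,
      if_neg n.succ_ne_zero, zero_mul, zero_add, ← sum_add_distrib]
    refine sum_eq_zero fun p hp => ?_
    obtain ⟨i, j⟩ := p
    rw [HasAntidiagonal.mem_antidiagonal] at hp
    subst hp
    simp only [coeff_mk]
    have hsq : ((-1 : R) ^ i) ^ 2 = 1 := by rw [← pow_mul, pow_mul', neg_one_sq, one_pow]
    linear_combination
      (-(coeff (i + 1) g * (-1) ^ j * (hessenbergMatrix (coeff · g) (coeff · g) j).det)) * hsq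

theorem sum_neg_one_pow_mul_coeff_pow_eq_det {g : R⟦X⟧} (hg : constantCoeff g = 0) (m : ℕ) :
    ∑ k ∈ range (m + 1), (-1) ^ (m + k) * coeff m (g ^ k) =
      (hessenbergMatrix (coeff · g) (coeff · g) m).det := by
  set D := mk fun m => (-1) ^ m * (hessenbergMatrix (coeff · g) (coeff · g) m).det
  have hgeom : ∑ k ∈ range (m + 1), (-g) ^ k = D - D * (-g) ^ (m + 1) := by
    calc ∑ k ∈ range (m + 1), (-g) ^ k
        = D * ((1 - -g) * ∑ k ∈ range (m + 1), (-g) ^ k) := by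
          rw [sub_neg_eq_add, ← mul_assoc, mul_comm D, one_add_mul_mk_det_hessenbergMatrix hg,
            one_mul]
      _ = D - D * (-g) ^ (m + 1) := by rw [mul_neg_geom_sum, mul_sub, mul_one]
  have htail : coeff m (D * (-g) ^ (m + 1)) = 0 :=
    X_pow_dvd_iff.mp ((pow_dvd_pow_of_dvd (X_dvd_iff.mpr (by simp [hg])) _).mul_left D) m
      m.lt_succ_self
  have hsign : ∀ k, (-1) ^ (m + k) * coeff m (g ^ k) = (-1) ^ m * coeff m ((-g) ^ k) := fun k => by
    rw [neg_pow g, pow_add, mul_assoc, show (-1 : R⟦X⟧) ^ k = C ((-1) ^ k) by simp, coeff_C_mul]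
  simp_rw [hsign, ← mul_sum, ← map_sum, hgeom, map_sub, htail, sub_zero, D, coeff_mk, ← mul_assoc,
    ← pow_add, Even.neg_one_pow ⟨m, rfl⟩, one_mul]

theorem coeff_sum_monomial_succ (a : ℕ → R) {n i : ℕ} (hi : i < n) :
    coeff (i + 1) (∑ j ∈ range n, monomial (j + 1) (a (j + 1))) = a (i + 1) := by
  simp [coeff_monomial, hi]

end

theorem deMoivre_det_formula_general (R : Type*) [CommRing R] (n : ℕ)
    (a : ℕ → R) (t : R)
    (f : PowerSeries R) (hf : f = ∑ i ∈ Finset.range n, PowerSeries.monomial (i + 1) (a (i + 1))) :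
    ∑ k ∈ Finset.range (n + 1), (-1 : R) ^ (n + k) * t ^ k * PowerSeries.coeff n (f ^ k) =
      Matrix.det (Matrix.of fun i j : Fin n =>
        if (j : ℕ) ≤ (i : ℕ) then a ((i : ℕ) - (j : ℕ) + 1) * t
        else if (j : ℕ) = (i : ℕ) + 1 then 1 else 0) := by
  have hg : constantCoeff (C t * f) = 0 := by
    simp [hf, ← coeff_zero_eq_constantCoeff_apply, coeff_monomial]
  have hmatrix : (Matrix.of fun i j : Fin n =>
      if (j : ℕ) ≤ (i : ℕ) then a ((i : ℕ) - (j : ℕ) + 1) * t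
      else if (j : ℕ) = (i : ℕ) + 1 then 1 else 0) =
      hessenbergMatrix (coeff · (C t * f)) (coeff · (C t * f)) n := by
    ext i j
    simp only [hessenbergMatrix, Matrix.of_apply, coeff_C_mul]
    split_ifs with hle h0 <;> try first | rfl | omega
    · rw [h0, hf, coeff_sum_monomial_succ a i.isLt, mul_comm, Nat.sub_zero]
    · rw [hf, coeff_sum_monomial_succ a (by omega), mul_comm]
  rw [hmatrix, ← sum_neg_one_pow_mul_coeff_pow_eq_det hg]
  refine sum_congr rfl fun k _ => ?_
  rw [mul_pow, ← map_pow, coeff_C_mul, mul_assoc]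

/-- **De Moivre polynomial determinant formula.**
For `f = a₁x + ⋯ + aₙxⁿ`, the alternating sum `Σ_{k=0}^{n} (−1)^{n+k} t^k [xⁿ](f^k)`
equals the determinant of the matrix `Mₙ(t)` with `(i,j)` entry `a_{i−j+1}·t` for `j ≤ i`,
`1` for `j = i+1`, and `0` otherwise (indices `1 ≤ i, j ≤ n`). -/
theorem deMoivre_det_formula (R : Type*) [CommRing R] (n : ℕ) (hn : 1 ≤ n)
    (a : ℕ → R) (t : R)
    (f : PowerSeries R) (hf : f = ∑ i ∈ Finset.range n, PowerSeries.monomial (i + 1) (a (i + 1))) :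
    ∑ k ∈ Finset.range (n + 1), (-1 : R) ^ (n + k) * t ^ k * PowerSeries.coeff n (f ^ k) =
      Matrix.det (Matrix.of fun i j : Fin n =>
        if (j : ℕ) ≤ (i : ℕ) then a ((i : ℕ) - (j : ℕ) + 1) * t
        else if (j : ℕ) = (i : ℕ) + 1 then 1 else 0) :=
  deMoivre_det_formula_general R n a t f hf
end

section
/- Let A be a commutative ring and let E, H be formal power series over A, each with constant coefficient 1, satisfying H(t)·E(−t) = 1 (where E(−t) denotes the series obtained from E by the substitution t ↦ −t). Then for every r ≥ 1: (i) [t^r]H = Σ_{k=0}^{r} (−1)^{r−k} · [t^r]((E − 1)^k), and (ii) [t^r]E = Σ_{k=0}^{r} (−1)^{r−k} · [t^r]((H − 1)^k). -/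
/-!
`H` is the inverse of `E(-t) = 1 - (1 - E(-t))`, hence the geometric series
`∑ₖ (1 - E(-t))ᵏ`, whose terms with `k > r` start in degree `> r`. Substituting `t ↦ -t`
turns `(1 - E(-t))ᵏ` into `(-1)ᵏ (E - 1)ᵏ(-t)`, whose `r`-th coefficient carries the sign
`(-1)^(r + k) = (-1)^(r - k)`. Substituting `t ↦ -t` in `H(t) E(-t) = 1` gives `E(t) H(-t) = 1`,
so (ii) is (i) with the roles of `E` and `H` exchanged.
-/

open PowerSeries Finset

theorem neg_one_pow_sub_of_le {R : Type*} [Monoid R] [HasDistribNeg R] {k r : ℕ} (hk : k ≤ r) :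
    (-1 : R) ^ (r - k) = (-1) ^ r * (-1) ^ k := by
  obtain ⟨m, rfl⟩ := Nat.exists_eq_add_of_le hk
  rw [Nat.add_sub_cancel_left, add_comm k m, pow_add, mul_assoc, ← pow_add,
    Even.neg_one_pow ⟨k, rfl⟩, mul_one]

section

variable {A : Type*} [CommRing A]

theorem coeff_eq_sum_coeff_one_sub_pow_of_mul_eq_one {F G : A⟦X⟧} (hF : constantCoeff F = 1)
    (h : G * F = 1) (r : ℕ) :
    coeff r G = ∑ k ∈ range (r + 1), coeff r ((1 - F) ^ k) := by
  set y := 1 - F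
  have hgeom : ∑ k ∈ range (r + 1), y ^ k = G - y ^ (r + 1) * G := by
    calc ∑ k ∈ range (r + 1), y ^ k = (∑ k ∈ range (r + 1), y ^ k) * (1 - y) * G := by
          rw [sub_sub_cancel, mul_assoc, mul_comm F, h, mul_one]
      _ = G - y ^ (r + 1) * G := by rw [geom_sum_mul_neg]; ring
  have htail : coeff r (y ^ (r + 1) * G) = 0 := by
    have hy : X ∣ y := X_dvd_iff.mpr (by simp [y, hF])
    exact X_pow_dvd_iff.mp ((pow_dvd_pow_of_dvd hy _).mul_right G) r r.lt_succ_self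
  rw [← map_sum, hgeom, map_sub, htail, sub_zero]

theorem coeff_eq_sum_of_mul_rescale_neg_one_eq_one {F G : A⟦X⟧} (hF : constantCoeff F = 1)
    (h : G * rescale (-1) F = 1) (r : ℕ) :
    coeff r G = ∑ k ∈ range (r + 1), (-1) ^ (r - k) * coeff r ((F - 1) ^ k) := by
  have hF' : constantCoeff (rescale (-1) F) = 1 := by
    rw [← coeff_zero_eq_constantCoeff_apply, coeff_rescale, coeff_zero_eq_constantCoeff_apply, hF]
    simp
  rw [coeff_eq_sum_coeff_one_sub_pow_of_mul_eq_one hF' h]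
  refine sum_congr rfl fun k hk => ?_
  have hsub : 1 - rescale (-1) F = -rescale (-1) (F - 1) := by rw [map_sub, map_one]; ring
  have hC : (-1 : A⟦X⟧) ^ k = C ((-1) ^ k) := by simp
  rw [hsub, neg_pow, hC, ← map_pow, coeff_C_mul, coeff_rescale,
    neg_one_pow_sub_of_le (Nat.lt_succ_iff.mp (mem_range.mp hk))]
  ring

theorem mul_rescale_neg_one_eq_one_symm {F G : A⟦X⟧} (h : G * rescale (-1) F = 1) :
    F * rescale (-1) G = 1 := by
  simpa [rescale_rescale, mul_comm] using congrArg (rescale (-1 : A)) h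

end

/-- **Transition formulas between `E` and `H`.**
If `E` and `H` are power series with constant term `1` satisfying `H(t)·E(−t) = 1`, then
for every `r ≥ 1` the coefficients of each are alternating sums of coefficients of powers
of the other minus its constant term. -/
theorem transition_E_H (A : Type*) [CommRing A] (E H : PowerSeries A)
    (hE : PowerSeries.constantCoeff E = 1) (hH : PowerSeries.constantCoeff H = 1)
    (hEH : H * PowerSeries.rescale (-1) E = 1) :
    ∀ r : ℕ, 1 ≤ r →
      (PowerSeries.coeff r H =
        ∑ k ∈ Finset.range (r + 1), (-1 : A) ^ (r - k) * PowerSeries.coeff r ((E - 1) ^ k)) ∧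
      (PowerSeries.coeff r E =
        ∑ k ∈ Finset.range (r + 1), (-1 : A) ^ (r - k) * PowerSeries.coeff r ((H - 1) ^ k)) :=
  fun r _ => ⟨coeff_eq_sum_of_mul_rescale_neg_one_eq_one hE hEH r,
    coeff_eq_sum_of_mul_rescale_neg_one_eq_one hH (mul_rescale_neg_one_eq_one_symm hEH) r⟩
end

section
/- Let A be a commutative ring and let (E, H, P) and (E₂, H₂, P₂) be symmetric triples over A. Then the following are also symmetric triples over A: (i) (H(t), E(t), P(−t)); (ii) (E(t)^m, H(t)^m, m·P(t)) for every integer m (powers of E and H taken in the group of units of A[[t]], E and H being units since their constant coefficients are 1); (iii) (E(−φ(−t)), H(φ(t)), φ′(t)·P(φ(t))) for every formal power series φ over A with constant coefficient 0 (substitution of the constant-term-zero series ±φ(±t) into E, H, P); (iv) (E(t)·E₂(t), H(t)·H₂(t), P(t) + P₂(t)). -/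
open PowerSeries Finset

/-- A symmetric triple: `E` and `H` have constant coefficient `1`,
`E′(t) = E(t)·P(−t)` and `H′(t) = H(t)·P(t)`. -/
def IsSymmetricTriple {A : Type*} [CommRing A] (E H P : PowerSeries A) : Prop :=
  PowerSeries.constantCoeff E = 1 ∧ PowerSeries.constantCoeff H = 1 ∧
    d⁄dX A E = E * PowerSeries.rescale (-1) P ∧ d⁄dX A H = H * P

/-- Substitution of a power series `G` with zero constant coefficient into `f`:
the coefficient of `tⁿ` in `f(G)` is `Σ_{k=0}^{n} ([t^k]f)·([tⁿ](G^k))`. -/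
noncomputable def substInto {A : Type*} [CommRing A] (G f : PowerSeries A) : PowerSeries A :=
  PowerSeries.mk fun n =>
    ∑ k ∈ Finset.range (n + 1), PowerSeries.coeff k f * PowerSeries.coeff n (G ^ k)

/-! The two identities say that `P(-t)` and `P(t)` are the logarithmic derivatives of `E` and `H`.
Logarithmic derivatives turn products and integer powers of units into sums and integer
multiples, and by the chain rule substituting `φ` turns `P` into `φ′ · P(φ)`. The coefficient
formula `substInto` agrees with Mathlib's `PowerSeries.subst`, which provides the chain rule. -/

namespace Derivation

variable {R B : Type*} [CommRing R] [CommRing B] [Algebra R B] (D : Derivation R B B)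

theorem apply_mul_eq_mul_add {a b p q : B} (ha : D a = a * p) (hb : D b = b * q) :
    D (a * b) = a * b * (p + q) := by
  rw [leibniz, ha, hb, smul_eq_mul, smul_eq_mul]
  ring

theorem apply_inv_eq_mul_neg (u : Bˣ) {q : B} (h : D u = u * q) :
    D ↑u⁻¹ = ↑u⁻¹ * -q := by
  refine (D.leibniz_of_mul_eq_one u.inv_mul).trans ?_
  rw [h, smul_eq_mul]
  linear_combination (-(↑u⁻¹ : B) * q) * u.inv_mul

theorem apply_zpow_eq_mul_zsmul (u : Bˣ) {q : B} (h : D u = u * q) (m : ℤ) :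
    D ↑(u ^ m) = ↑(u ^ m) * (m • q) := by
  induction m using Int.induction_on with
  | zero => simp
  | succ m ih =>
    rw [zpow_add_one, Units.val_mul, D.apply_mul_eq_mul_add ih h, add_zsmul, one_zsmul]
  | pred m ih =>
    rw [zpow_sub_one, Units.val_mul, D.apply_mul_eq_mul_add ih (D.apply_inv_eq_mul_neg u h),
      sub_zsmul, one_zsmul]

end Derivation

theorem MonoidHom.map_val_zpow_eq_one {M N : Type*} [Monoid M] [Monoid N] (f : M →* N)
    (u : Mˣ) (hu : f u = 1) (m : ℤ) : f ↑(u ^ m) = 1 := by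
  have : Units.map f u = 1 := Units.ext hu
  rw [← Units.coe_map, map_zpow, this, one_zpow, Units.val_one]

namespace PowerSeries

variable {A : Type*} [CommRing A]

theorem coeff_pow_eq_zero_of_lt {G : PowerSeries A} (hG : constantCoeff G = 0) {n k : ℕ}
    (h : n < k) : coeff n (G ^ k) = 0 :=
  X_pow_dvd_iff.mp (pow_dvd_pow_of_dvd (X_dvd_iff.mpr hG) k) n h

theorem substInto_eq_subst {G : PowerSeries A} (hG : constantCoeff G = 0) (f : PowerSeries A) :
    substInto G f = f.subst G := by
  ext n
  rw [coeff_subst' (HasSubst.of_constantCoeff_zero' hG), substInto, coeff_mk]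
  refine (finsum_eq_sum_of_support_subset _ fun k hk => ?_).symm
  by_contra hkn
  simp only [coe_range, Set.mem_Iio, not_lt] at hkn
  exact hk (by simp only [coeff_pow_eq_zero_of_lt hG (show n < k by omega), mul_zero])

theorem constantCoeff_substInto (G f : PowerSeries A) :
    constantCoeff (substInto G f) = constantCoeff f := by
  rw [← coeff_zero_eq_constantCoeff_apply, ← coeff_zero_eq_constantCoeff_apply, substInto,
    coeff_mk]
  simp

theorem rescale_subst (r : A) {G : PowerSeries A} (hG : HasSubst G) (f : PowerSeries A) :
    rescale r (f.subst G) = f.subst (rescale r G) := by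
  rw [rescale_eq_subst, rescale_eq_subst, subst_comp_subst_apply hG (HasSubst.smul_X' r)]

theorem subst_rescale (r : A) {G : PowerSeries A} (hG : HasSubst G) (f : PowerSeries A) :
    (rescale r f).subst G = f.subst (r • G) := by
  rw [rescale_eq_subst, subst_comp_subst_apply (HasSubst.smul_X' r) hG, subst_smul hG,
    subst_X hG]

theorem derivative_rescale (r : A) (f : PowerSeries A) :
    d⁄dX A (rescale r f) = C r * rescale r (d⁄dX A f) := by
  ext n
  rw [coeff_derivative, coeff_rescale, coeff_C_mul, coeff_rescale, coeff_derivative, pow_succ]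
  ring

theorem derivative_subst_eq_mul {f Q G : PowerSeries A} (hG : HasSubst G)
    (hf : d⁄dX A f = f * Q) : d⁄dX A (f.subst G) = f.subst G * (d⁄dX A G * Q.subst G) := by
  rw [derivative_subst hG, hf, subst_mul hG]
  ring

end PowerSeries

open PowerSeries

namespace IsSymmetricTriple

variable {A : Type*} [CommRing A] {E H P : PowerSeries A}

theorem swap (hT : IsSymmetricTriple E H P) : IsSymmetricTriple H E (rescale (-1) P) := by
  obtain ⟨hE, hH, hE', hH'⟩ := hT
  refine ⟨hH, hE, ?_, hE'⟩
  rwa [rescale_rescale, neg_mul_neg, one_mul, rescale_one, RingHom.id_apply]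

theorem zpow (hT : IsSymmetricTriple E H P) (m : ℤ) {uE uH : (PowerSeries A)ˣ}
    (huE : (uE : PowerSeries A) = E) (huH : (uH : PowerSeries A) = H) :
    IsSymmetricTriple ↑(uE ^ m) ↑(uH ^ m) (m • P) := by
  obtain ⟨hE, hH, hE', hH'⟩ := hT
  subst huE huH
  refine ⟨(constantCoeff (R := A)).toMonoidHom.map_val_zpow_eq_one uE hE m,
    (constantCoeff (R := A)).toMonoidHom.map_val_zpow_eq_one uH hH m, ?_,
    (d⁄dX A).apply_zpow_eq_mul_zsmul uH hH' m⟩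
  rw [map_zsmul]
  exact (d⁄dX A).apply_zpow_eq_mul_zsmul uE hE' m

theorem substInto (hT : IsSymmetricTriple E H P) {φ : PowerSeries A}
    (hφ : constantCoeff φ = 0) :
    IsSymmetricTriple (substInto (-rescale (-1) φ) E) (substInto φ H)
      (d⁄dX A φ * substInto φ P) := by
  obtain ⟨hE, hH, hE', hH'⟩ := hT
  set ψ := -rescale (-1) φ
  have hψ : constantCoeff ψ = 0 := by
    rw [map_neg, ← coeff_zero_eq_constantCoeff_apply, coeff_rescale,
      coeff_zero_eq_constantCoeff_apply, hφ, mul_zero, neg_zero]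
  have hφ' := HasSubst.of_constantCoeff_zero' hφ
  have hψ' := HasSubst.of_constantCoeff_zero' hψ
  -- `ψ(t) = -φ(-t)`, so `ψ′(t) = φ′(-t)` and `P(-ψ(t)) = P(φ(-t))`
  have hψP : d⁄dX A ψ * (rescale (-1) P).subst ψ = rescale (-1) (d⁄dX A φ * P.subst φ) := by
    rw [subst_rescale _ hψ', map_mul, rescale_subst _ hφ', neg_one_smul, neg_neg,
      map_neg, derivative_rescale]
    simp
  refine ⟨by rwa [constantCoeff_substInto], by rwa [constantCoeff_substInto], ?_, ?_⟩
  · rw [substInto_eq_subst hψ, substInto_eq_subst hφ, derivative_subst_eq_mul hψ' hE', hψP]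
  · rw [substInto_eq_subst hφ, substInto_eq_subst hφ, derivative_subst_eq_mul hφ' hH']

theorem mul (hT : IsSymmetricTriple E H P) {E₂ H₂ P₂ : PowerSeries A}
    (hT₂ : IsSymmetricTriple E₂ H₂ P₂) : IsSymmetricTriple (E * E₂) (H * H₂) (P + P₂) := by
  obtain ⟨hE, hH, hE', hH'⟩ := hT
  obtain ⟨hE₂, hH₂, hE₂', hH₂'⟩ := hT₂
  refine ⟨by rw [map_mul, hE, hE₂, one_mul], by rw [map_mul, hH, hH₂, one_mul], ?_,
    (d⁄dX A).apply_mul_eq_mul_add hH' hH₂'⟩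
  rw [map_add]
  exact (d⁄dX A).apply_mul_eq_mul_add hE' hE₂'

end IsSymmetricTriple

/-- **Closure properties of symmetric triples**: swapping, integer powers (taken in the
unit group of `A[[t]]`), substitution of a constant-term-zero series, and products. -/
theorem symmetricTriple_group (A : Type*) [CommRing A] (E H P E₂ H₂ P₂ : PowerSeries A)
    (hT : IsSymmetricTriple E H P) (hT₂ : IsSymmetricTriple E₂ H₂ P₂) :
    IsSymmetricTriple H E (PowerSeries.rescale (-1) P) ∧
    (∀ (m : ℤ) (uE uH : (PowerSeries A)ˣ), (uE : PowerSeries A) = E →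
      (uH : PowerSeries A) = H →
      IsSymmetricTriple ((uE ^ m : (PowerSeries A)ˣ) : PowerSeries A)
        ((uH ^ m : (PowerSeries A)ˣ) : PowerSeries A) (m • P)) ∧
    (∀ φ : PowerSeries A, PowerSeries.constantCoeff φ = 0 →
      IsSymmetricTriple (substInto (-(PowerSeries.rescale (-1) φ)) E) (substInto φ H)
        (d⁄dX A φ * substInto φ P)) ∧
    IsSymmetricTriple (E * E₂) (H * H₂) (P + P₂) :=
  ⟨hT.swap, fun m _ _ huE huH => hT.zpow m huE huH, fun _ hφ => hT.substInto hφ, hT.mul hT₂⟩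
end

section
/- For all integers n ≥ 1 and k ≥ 1, the coefficient of t^k in the formal power series ∏_{j=1}^{n} (1 − t/j)^{−1} over ℚ equals Σ_{j=1}^{n} (−1)^{j−1} · C(n, j) · (1/j^k), where C(n, j) is the binomial coefficient. (Equivalently, the complete homogeneous symmetric polynomial h_k evaluated at 1, 1/2, …, 1/n equals Σ_{j=1}^{n} (−1)^{j−1} C(n, j) j^{−k}.) -/
/-!
Write `h(n, k)` for the coefficient of `t^k` in `P_n = ∏_{j ≤ n} (1 - t/j)⁻¹`. Since
`P_{n+1} (1 - t/(n+1)) = P_n`, it satisfies `h(n+1, k+1) = h(n, k+1) + h(n+1, k)/(n+1)`, with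
`h(n, 0) = 1` and `h(0, k+1) = 0`. The alternating binomial sum obeys the same recurrence, by
Pascal's rule together with `j C(n+1, j) = (n+1) C(n, j-1)`, and the same boundary values, the
value at `k = 0` being the vanishing of the alternating sum of binomial coefficients.
-/

open PowerSeries Finset

theorem PowerSeries.coeff_succ_mul_inv_one_sub_C_mul_X {K : Type*} [Field K] (f : K⟦X⟧) (a : K)
    (k : ℕ) :
    coeff (k + 1) (f * (1 - C a * X)⁻¹) = coeff (k + 1) f + a * coeff k (f * (1 - C a * X)⁻¹) := by
  set g := f * (1 - C a * X)⁻¹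
  have hf : f = g - C a * (g * X) := by
    rw [show g - C a * (g * X) = g * (1 - C a * X) by ring, mul_assoc,
      PowerSeries.inv_mul_cancel _ (by simp), mul_one]
  rw [hf]
  simp [coeff_C_mul, coeff_succ_mul_X]

@[to_additive sum_Icc_one_eq_sum_range]
theorem Finset.prod_Icc_one_eq_prod_range {M : Type*} [CommMonoid M] (f : ℕ → M) (n : ℕ) :
    ∏ j ∈ Icc 1 n, f j = ∏ i ∈ range n, f (i + 1) := by
  rw [← Finset.Ico_add_one_right_eq_Icc, prod_Ico_eq_prod_range]
  simp [add_comm]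

def altChooseSum (n k : ℕ) : ℚ :=
  ∑ i ∈ range n, (-1) ^ i * n.choose (i + 1) / (i + 1 : ℚ) ^ k

theorem altChooseSum_zero_right {n : ℕ} (hn : n ≠ 0) : altChooseSum n 0 = 1 := by
  have h := congrArg (Int.cast (R := ℚ)) (Int.alternating_sum_range_choose_of_ne hn)
  push_cast at h
  simp only [sum_range_succ', pow_succ, mul_neg_one, neg_mul, sum_neg_distrib] at h
  simp only [altChooseSum, pow_zero, div_one]
  simpa using neg_add_eq_zero.mp h

theorem altChooseSum_succ_succ (n k : ℕ) :
    altChooseSum (n + 1) (k + 1) = altChooseSum n (k + 1) + altChooseSum (n + 1) k / (n + 1) := by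
  have hext : altChooseSum n (k + 1) =
      ∑ i ∈ range (n + 1), (-1) ^ i * n.choose (i + 1) / (i + 1 : ℚ) ^ (k + 1) := by
    simp [altChooseSum, sum_range_succ]
  rw [hext, altChooseSum, altChooseSum, sum_div, ← sum_add_distrib]
  refine sum_congr rfl fun i _ => ?_
  have pascal : ((n + 1).choose (i + 1) : ℚ) = n.choose i + n.choose (i + 1) := by
    exact_mod_cast Nat.choose_succ_succ' n i
  have absorb : ((n + 1).choose (i + 1) : ℚ) / (n + 1) = n.choose i / (i + 1) := by
    rw [div_eq_div_iff (by positivity) (by positivity)]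
    exact_mod_cast (Nat.add_one_mul_choose_eq n i).symm.trans (Nat.mul_comm _ _)
  rw [pascal] at ⊢ absorb
  generalize (i : ℚ) + 1 = x at absorb ⊢
  linear_combination (-(-1) ^ i / x ^ k) * absorb

theorem coeff_prod_range_inv_one_sub_eq_altChooseSum (k : ℕ) {n : ℕ} (hn : n ≠ 0) :
    coeff k (∏ i ∈ range n, (1 - C (1 / (i + 1 : ℚ)) * X)⁻¹) = altChooseSum n k := by
  induction k generalizing n with
  | zero => simp [map_prod, altChooseSum_zero_right hn]
  | succ k ih =>
    clear hn
    induction n with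
    | zero => simp [altChooseSum]
    | succ n ihn =>
      rw [prod_range_succ, coeff_succ_mul_inv_one_sub_C_mul_X, ← prod_range_succ, ihn,
        ih n.succ_ne_zero, altChooseSum_succ_succ]
      ring

theorem harmonic_multiset_formula_general (n k : ℕ) (hn : 1 ≤ n) :
    PowerSeries.coeff (R := ℚ) k
        (∏ j ∈ Finset.Icc 1 n, (1 - PowerSeries.C (R := ℚ) (1 / (j : ℚ)) * PowerSeries.X)⁻¹) =
      ∑ j ∈ Finset.Icc 1 n, (-1 : ℚ) ^ (j - 1) * (n.choose j : ℚ) * (1 / (j : ℚ) ^ k) := by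
  rw [prod_Icc_one_eq_prod_range, sum_Icc_one_eq_sum_range]
  push_cast
  rw [coeff_prod_range_inv_one_sub_eq_altChooseSum k (by omega), altChooseSum]
  refine sum_congr rfl fun i _ => ?_
  simp [div_eq_mul_inv]

/-- **Harmonic multiset numbers as alternating binomial sums.**
For `n, k ≥ 1`, the coefficient of `t^k` in `∏_{j=1}^{n} (1 − t/j)^{−1}` over `ℚ`
equals `Σ_{j=1}^{n} (−1)^{j−1} C(n,j)/j^k`. -/
theorem harmonic_multiset_formula (n k : ℕ) (hn : 1 ≤ n) (hk : 1 ≤ k) :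
    PowerSeries.coeff (R := ℚ) k
        (∏ j ∈ Finset.Icc 1 n, (1 - PowerSeries.C (R := ℚ) (1 / (j : ℚ)) * PowerSeries.X)⁻¹) =
      ∑ j ∈ Finset.Icc 1 n, (-1 : ℚ) ^ (j - 1) * (n.choose j : ℚ) * (1 / (j : ℚ) ^ k) :=
  harmonic_multiset_formula_general n k hn
end

section
/- Work in the ring of formal power series ℚ[[q]]. Let φ be the power series with [q⁰]φ = 1, [qⁿ]φ = 2 if n ≥ 1 is a perfect square, and [qⁿ]φ = 0 otherwise. For integers s ≥ 0 and n ≥ 0 define N_s(n) := [qⁿ](φ^s) and p̄_s(n) := [qⁿ]((∏_{j=1}^{n} (1 + q^j)·(1 − q^j)^{−1})^s) (the product over j from 1 to n; for n = 0 the empty product). Then for every integer r ≥ 1 and every n ≥ 0: N_r(n) = Σ_{j=0}^{n} (−1)^{n−j} C(n+1, j+1) · p̄_{r·j}(n), and p̄_r(n) = Σ_{j=0}^{n} (−1)^{n−j} C(n+1, j+1) · N_{r·j}(n). -/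
open PowerSeries Finset

open scoped Classical in
/-- The theta series `φ(q) = Σ_{m∈ℤ} q^{m²} = 1 + 2Σ_{m≥1} q^{m²}`. -/
noncomputable def thetaSeries : PowerSeries ℚ :=
  PowerSeries.mk fun n => if n = 0 then 1 else if ∃ m : ℕ, n = m ^ 2 then 2 else 0

/-- `N_s(n)`: the coefficient of `qⁿ` in `φ(q)^s` (number of representations of `n`
as an ordered sum of `s` squares, for `s ≥ 1`). -/
noncomputable def numSqReps (s n : ℕ) : ℚ := PowerSeries.coeff (R := ℚ) n (thetaSeries ^ s)

/-- `p̄_s(n)`: the coefficient of `qⁿ` in `(∏_{j=1}^{n} (1+q^j)/(1−q^j))^s`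
(the number of `s`-colored overpartitions of `n`, for `s ≥ 1`). -/
noncomputable def overPart (s n : ℕ) : ℚ :=
  PowerSeries.coeff (R := ℚ) n
    ((∏ j ∈ Finset.Icc 1 n, (1 + PowerSeries.X ^ j) * (1 - PowerSeries.X ^ j)⁻¹) ^ s)

/-!
By Gauss's identity `φ(-q) = ∏_{j ≥ 1} (1 - q^j) / (1 + q^j)`, the series `φ(-q)^r` and
`P(q)^r = ∏_j ((1 + q^j) / (1 - q^j))^r` are reciprocal, and modulo `q^(n+1)` only the factors
with `j ≤ n` matter. For a series `B` with constant term `1`,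
`Σ_j (-1)^(n-j) C(n+1, j+1) B^j = ((B - 1)^(n+1) + (-1)^n) / B`, whose `qⁿ`-coefficient is
`(-1)^n [qⁿ] B⁻¹`. Taking `B = P^r` and `B = φ^r`, and using `[qⁿ] f(-q) = (-1)^n [qⁿ] f(q)`,
gives the two formulas.

Gauss's identity is proved modulo `q^(n+1)` from Cauchy's finite `q`-binomial theorem in base `q²`:
it gives `(-1)^n (q; q²)_n² (q²; q²)_{2n} = Σ_{k ≤ 2n} (-1)^k q^((k-n)²) c_k`, where
`c_k = [2n choose k]_{q²} (q²; q²)_{2n}` is `≡ 1` modulo `q^(2 min(k, 2n-k) + 2)`, which is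
enough to replace `c_k` by `1` modulo `q^(n+1)`.
-/

namespace Nat

theorem choose_two_succ (k : ℕ) : (k + 1).choose 2 = k.choose 2 + k := by
  rw [choose_succ_succ', choose_one_right, add_comm]

theorem two_mul_choose_two_add_self (k : ℕ) : 2 * k.choose 2 + k = k ^ 2 := by
  induction k with
  | zero => rfl
  | succ k ih => rw [choose_two_succ]; linear_combination ih

end Nat

theorem sum_range_two_mul_add_one (n : ℕ) : ∑ i ∈ range n, (2 * i + 1) = n ^ 2 := by
  induction n with
  | zero => rfl
  | succ n ih => rw [sum_range_succ, ih]; ring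

theorem natAbs_sq_add_two_mul_min_le (n k : ℕ) (hk : k ≤ 2 * n) :
    n + 1 ≤ ((k : ℤ) - n).natAbs ^ 2 + 2 * (min k (2 * n - k) + 1) := by
  zify [hk]
  rw [sq_abs]
  rcases le_total k n with h | h
  · rw [min_eq_left (by omega)]; nlinarith
  · rw [min_eq_right (by omega)]; nlinarith

section CommRing

variable {A : Type*} [CommRing A]

theorem sum_neg_one_pow_mul_choose_mul_pow_succ (b : A) (n : ℕ) :
    ∑ j ∈ range (n + 1), (-1) ^ (n - j) * ((n + 1).choose (j + 1) : A) * b ^ (j + 1) =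
      (b - 1) ^ (n + 1) + (-1) ^ n := by
  rw [sub_eq_add_neg, add_pow,
    sum_range_succ' (fun m => b ^ m * (-1) ^ (n + 1 - m) * ((n + 1).choose m : A))]
  simp only [Nat.add_sub_add_right, Nat.choose_zero_right, Nat.sub_zero, pow_zero, one_mul,
    Nat.cast_one, mul_one]
  rw [add_assoc, pow_succ, mul_neg_one, neg_add_cancel, add_zero]
  exact sum_congr rfl fun j _ => by ring

theorem sum_range_two_mul_add_one_neg_one_pow_mul (g : ℕ → A) (n : ℕ) :
    ∑ k ∈ range (2 * n + 1), (-1) ^ k * g ((k : ℤ) - n).natAbs =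
      (-1) ^ n * (g 0 + 2 * ∑ d ∈ Icc 1 n, (-1) ^ d * g d) := by
  induction n with
  | zero => simp
  | succ n ih =>
    rw [show 2 * (n + 1) + 1 = 2 * n + 1 + 1 + 1 by ring, sum_range_succ, sum_range_succ',
      sum_Icc_succ_top (by omega)]
    have hshift : ∀ k ∈ range (2 * n + 1),
        (-1 : A) ^ (k + 1) * g ((↑(k + 1) : ℤ) - ↑(n + 1)).natAbs =
          -((-1) ^ k * g ((k : ℤ) - n).natAbs) := fun k _ => by
      rw [pow_succ]; push_cast; ring_nf
    rw [sum_congr rfl hshift, sum_neg_distrib, ih]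
    have h1 : ((↑(2 * n + 2) : ℤ) - ↑(n + 1)).natAbs = n + 1 := by omega
    have h2 : (((0 : ℕ) : ℤ) - ↑(n + 1)).natAbs = n + 1 := by omega
    have hsq : ((-1 : A) ^ (n + 1)) ^ 2 = 1 := by
      rw [← pow_mul, mul_comm, pow_mul, neg_one_sq, one_pow]
    rw [h1, h2]
    linear_combination (-g (n + 1)) * hsq

def qPochhammer (a x : A) (k : ℕ) : A := ∏ i ∈ range k, (1 - a * x ^ i)

theorem qPochhammer_zero (a x : A) : qPochhammer a x 0 = 1 := prod_range_zero _

theorem qPochhammer_succ (a x : A) (k : ℕ) :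
    qPochhammer a x (k + 1) = qPochhammer a x k * (1 - a * x ^ k) :=
  prod_range_succ _ _

theorem qPochhammer_succ' (a x : A) (k : ℕ) :
    qPochhammer a x (k + 1) = (1 - a) * qPochhammer (a * x) x k := by
  simp only [qPochhammer, prod_range_succ', pow_succ, pow_zero, mul_one, mul_assoc, mul_comm]

theorem qPochhammer_add (a x : A) (k l : ℕ) :
    qPochhammer a x (k + l) = qPochhammer a x k * qPochhammer (a * x ^ k) x l := by
  simp only [qPochhammer, prod_range_add, pow_add, mul_assoc]

theorem qPochhammer_smodEq_one {I : Ideal A} {a : A} (ha : a ∈ I) (x : A) (k : ℕ) :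
    qPochhammer a x k ≡ 1 [SMOD I] := by
  have h : ∀ i ∈ range k, 1 - a * x ^ i ≡ 1 [SMOD I] := fun i _ => by
    rw [SModEq.sub_mem, sub_sub_cancel_left]
    exact I.neg_mem (I.mul_mem_right _ ha)
  simpa [qPochhammer] using SModEq.prod h

theorem qPochhammer_add_smodEq {I : Ideal A} {a x : A} {k : ℕ} (h : a * x ^ k ∈ I) (l : ℕ) :
    qPochhammer a x (k + l) ≡ qPochhammer a x k [SMOD I] := by
  simpa [qPochhammer_add] using SModEq.rfl.mul (qPochhammer_smodEq_one h x l)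

/-- The Gaussian binomial coefficient `[a+b choose a]_x` times `(x; x)_(a+b)`, which needs no
division. -/
def scaledGaussBinom (x : A) (a b : ℕ) : A :=
  qPochhammer (x ^ (b + 1)) x a * qPochhammer (x ^ (a + 1)) x b

theorem scaledGaussBinom_zero_left (x : A) (b : ℕ) :
    scaledGaussBinom x 0 b = qPochhammer x x b := by
  simp [scaledGaussBinom, qPochhammer_zero]

theorem scaledGaussBinom_zero_right (x : A) (a : ℕ) :
    scaledGaussBinom x a 0 = qPochhammer x x a := by
  simp [scaledGaussBinom, qPochhammer_zero]

theorem scaledGaussBinom_succ_succ (x : A) (a b : ℕ) :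
    scaledGaussBinom x (a + 1) (b + 1) = (1 - x ^ (a + b + 2)) *
      (scaledGaussBinom x (a + 1) b + x ^ (b + 1) * scaledGaussBinom x a (b + 1)) := by
  simp only [scaledGaussBinom]
  rw [qPochhammer_succ _ _ a, qPochhammer_succ _ _ b, qPochhammer_succ' _ _ a,
    qPochhammer_succ' _ _ b, ← pow_succ, ← pow_succ]
  ring

theorem scaledGaussBinom_smodEq_one {I : Ideal A} {x : A} (hx : x ∈ I) (a b : ℕ) :
    scaledGaussBinom x a b ≡ 1 [SMOD I ^ (min a b + 1)] := by
  have hmem : ∀ c, min a b ≤ c → x ^ (c + 1) ∈ I ^ (min a b + 1) := fun c hc =>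
    Ideal.pow_le_pow_right (by omega) (Ideal.pow_mem_pow hx _)
  simpa [scaledGaussBinom] using (qPochhammer_smodEq_one (hmem b (min_le_right a b)) x a).mul
    (qPochhammer_smodEq_one (hmem a (min_le_left a b)) x b)

/-- Cauchy's finite `q`-binomial theorem. -/
theorem qPochhammer_mul_prod_add_mul_pow (x Y Z : A) (m : ℕ) :
    qPochhammer x x m * ∏ i ∈ range m, (Y + Z * x ^ i) =
      ∑ k ∈ range (m + 1), x ^ k.choose 2 * scaledGaussBinom x k (m - k) * Z ^ k * Y ^ (m - k) := by
  set t : ℕ → ℕ → A := fun m k =>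
    x ^ k.choose 2 * scaledGaussBinom x k (m - k) * Z ^ k * Y ^ (m - k) with ht
  induction m with
  | zero => simp [qPochhammer_zero, scaledGaussBinom_zero_left]
  | succ m ih =>
    have hpascal : ∀ k ∈ range m,
        t (m + 1) (k + 1) = (1 - x ^ (m + 1)) * (Y * t m (k + 1) + Z * x ^ m * t m k) := by
      intro k hk
      obtain ⟨b, rfl⟩ := Nat.exists_eq_add_of_lt (mem_range.1 hk)
      simp only [ht, show k + b + 1 + 1 - (k + 1) = b + 1 by omega,
        show k + b + 1 - (k + 1) = b by omega, show k + b + 1 - k = b + 1 by omega,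
        scaledGaussBinom_succ_succ, Nat.choose_two_succ]
      ring
    have hfirst : t (m + 1) 0 = (1 - x ^ (m + 1)) * (Y * t m 0) := by
      simp only [ht, Nat.sub_zero, scaledGaussBinom_zero_left, qPochhammer_succ]
      ring
    have hlast : t (m + 1) (m + 1) = (1 - x ^ (m + 1)) * (Z * x ^ m * t m m) := by
      simp only [ht, Nat.sub_self, scaledGaussBinom_zero_right, qPochhammer_succ,
        Nat.choose_two_succ]
      ring
    calc qPochhammer x x (m + 1) * ∏ i ∈ range (m + 1), (Y + Z * x ^ i)
        = (1 - x ^ (m + 1)) * (Y + Z * x ^ m) * ∑ k ∈ range (m + 1), t m k := by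
          rw [qPochhammer_succ, prod_range_succ, ← ih]
          ring
      _ = ∑ k ∈ range (m + 1 + 1), t (m + 1) k := by
          rw [sum_range_succ' (t (m + 1)), sum_range_succ (fun k => t (m + 1) (k + 1)),
            sum_congr rfl hpascal, hfirst, hlast, ← mul_sum, sum_add_distrib, ← mul_sum, ← mul_sum]
          linear_combination (1 - x ^ (m + 1)) * Y * sum_range_succ' (t m) m +
            (1 - x ^ (m + 1)) * Z * x ^ m * sum_range_succ (t m) m

end CommRing

namespace PowerSeries

section CommRing

variable {R : Type*} [CommRing R]

theorem X_pow_mem_span_X_pow {N e : ℕ} (h : N ≤ e) :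
    (X : R⟦X⟧) ^ e ∈ Ideal.span {X ^ N} :=
  Ideal.mem_span_singleton.2 (pow_dvd_pow X h)

theorem coeff_eq_of_smodEq {N i : ℕ} {f g : R⟦X⟧} (h : f ≡ g [SMOD Ideal.span {X ^ N}])
    (hi : i < N) : coeff i f = coeff i g := by
  rw [SModEq.sub_mem, Ideal.mem_span_singleton] at h
  simpa [sub_eq_zero] using X_pow_dvd_iff.1 h i hi

theorem X_pow_mul_smodEq {M : ℕ} {f g : R⟦X⟧} (h : f ≡ g [SMOD Ideal.span {X ^ M}]) (e : ℕ) :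
    X ^ e * f ≡ X ^ e * g [SMOD Ideal.span {X ^ (e + M)}] := by
  rw [SModEq.sub_mem, Ideal.mem_span_singleton] at h ⊢
  rw [← mul_sub, pow_add]
  exact mul_dvd_mul_left _ h

theorem rescale_smodEq {N : ℕ} {f g : R⟦X⟧} (h : f ≡ g [SMOD Ideal.span {X ^ N}]) (c : R) :
    rescale c f ≡ rescale c g [SMOD Ideal.span {X ^ N}] := by
  rw [SModEq.sub_mem, Ideal.mem_span_singleton] at h ⊢
  obtain ⟨d, hd⟩ := h
  rw [← map_sub, hd, map_mul, map_pow, rescale_X, mul_pow, mul_comm (C c ^ N), mul_assoc]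
  exact dvd_mul_right _ _

theorem rescale_neg_one_rescale_neg_one (f : R⟦X⟧) : rescale (-1) (rescale (-1) f) = f := by
  rw [rescale_rescale, neg_one_mul, neg_neg, rescale_one, RingHom.id_apply]

theorem rescale_neg_one_mul_smodEq_one_symm {f g : R⟦X⟧} {N : ℕ}
    (h : rescale (-1) f * g ≡ 1 [SMOD Ideal.span {X ^ N}]) :
    rescale (-1) g * f ≡ 1 [SMOD Ideal.span {X ^ N}] := by
  simpa [rescale_neg_one_rescale_neg_one, mul_comm] using rescale_smodEq h (-1)

theorem rescale_neg_one_X_pow_sq (d : ℕ) :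
    rescale (-1) ((X : R⟦X⟧) ^ (d ^ 2)) = (-1) ^ d * X ^ (d ^ 2) := by
  rw [map_pow, rescale_neg_one_X, neg_pow, neg_one_pow_eq_pow_mod_two (n := d ^ 2), Nat.pow_mod,
    neg_one_pow_eq_pow_mod_two (n := d)]
  rcases Nat.mod_two_eq_zero_or_one d with h | h <;> simp [h]

theorem prod_range_two_mul_X_pow_add_neg_X_mul_X_sq_pow (n : ℕ) :
    ∏ i ∈ range (2 * n), ((X : R⟦X⟧) ^ (2 * n) + -X * (X ^ 2) ^ i) =
      (-1) ^ n * X ^ (3 * n ^ 2) * qPochhammer X (X ^ 2) n ^ 2 := by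
  have hlow : ∀ i ∈ range n, (X : R⟦X⟧) ^ (2 * n) + -X * (X ^ 2) ^ i =
      -X ^ (2 * i + 1) * (1 - X * (X ^ 2) ^ (n - 1 - i)) := by
    intro i hi
    have : (X : R⟦X⟧) ^ (2 * i + 1) * (X * (X ^ 2) ^ (n - 1 - i)) = X ^ (2 * n) := by
      rw [← pow_mul, ← pow_succ', ← pow_add]
      congr 1
      have := mem_range.1 hi
      omega
    rw [← this, ← pow_mul, pow_succ]
    ring
  have hhigh : ∀ i ∈ range n, (X : R⟦X⟧) ^ (2 * n) + -X * (X ^ 2) ^ (n + i) =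
      X ^ (2 * n) * (1 - X * (X ^ 2) ^ i) := by
    intro i _
    rw [pow_add, ← pow_mul]
    ring
  rw [two_mul n, prod_range_add, ← two_mul, prod_congr rfl hlow, prod_congr rfl hhigh,
    prod_mul_distrib, prod_mul_distrib, prod_range_reflect (fun j => 1 - X * (X ^ 2) ^ j)]
  simp only [neg_eq_neg_one_mul (X ^ _), prod_mul_distrib, prod_const, card_range,
    prod_pow_eq_pow_sum, sum_range_two_mul_add_one]
  rw [qPochhammer]
  ring

/-- Cauchy's theorem at base `X²` with `Y = X^(2n)` and `Z = -X`, divided by `X^(3n²)`. -/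
theorem neg_one_pow_mul_qPochhammer_sq_mul_qPochhammer (n : ℕ) :
    (-1) ^ n * (qPochhammer (X : R⟦X⟧) (X ^ 2) n ^ 2 * qPochhammer (X ^ 2) (X ^ 2) (2 * n)) =
      ∑ k ∈ range (2 * n + 1),
        (-1) ^ k * X ^ (((k : ℤ) - n).natAbs ^ 2) * scaledGaussBinom (X ^ 2) k (2 * n - k) := by
  have hterm : ∀ k ∈ range (2 * n + 1),
      ((X : R⟦X⟧) ^ 2) ^ k.choose 2 * scaledGaussBinom (X ^ 2) k (2 * n - k) * (-X) ^ k *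
        (X ^ (2 * n)) ^ (2 * n - k) = X ^ (3 * n ^ 2) *
        ((-1) ^ k * X ^ (((k : ℤ) - n).natAbs ^ 2) * scaledGaussBinom (X ^ 2) k (2 * n - k)) := by
    intro k hk
    have hk' : k ≤ 2 * n := by have := mem_range.1 hk; omega
    have hexp : 2 * k.choose 2 + k + 2 * n * (2 * n - k) =
        3 * n ^ 2 + ((k : ℤ) - n).natAbs ^ 2 := by
      rw [Nat.two_mul_choose_two_add_self]
      zify [hk']
      rw [sq_abs]
      ring
    have hX : ((X : R⟦X⟧) ^ 2) ^ k.choose 2 * X ^ k * (X ^ (2 * n)) ^ (2 * n - k) =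
        X ^ (3 * n ^ 2) * X ^ (((k : ℤ) - n).natAbs ^ 2) := by
      rw [← pow_mul, ← pow_mul, ← pow_add, ← pow_add, ← pow_add, ← hexp]
    rw [neg_pow]
    linear_combination (-1) ^ k * scaledGaussBinom (X ^ 2) k (2 * n - k) * hX
  apply X_pow_mul_cancel (k := 3 * n ^ 2)
  rw [mul_sum, ← sum_congr rfl hterm, ← qPochhammer_mul_prod_add_mul_pow,
    prod_range_two_mul_X_pow_add_neg_X_mul_X_sq_pow]
  ring

theorem sum_mul_scaledGaussBinom_smodEq (n : ℕ) :
    ∑ k ∈ range (2 * n + 1),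
        (-1) ^ k * X ^ (((k : ℤ) - n).natAbs ^ 2) *
          scaledGaussBinom ((X : R⟦X⟧) ^ 2) k (2 * n - k) ≡
      ∑ k ∈ range (2 * n + 1), (-1) ^ k * X ^ (((k : ℤ) - n).natAbs ^ 2)
      [SMOD Ideal.span {X ^ (n + 1)}] := by
  refine SModEq.sum fun k hk => ?_
  have hG : scaledGaussBinom ((X : R⟦X⟧) ^ 2) k (2 * n - k) ≡ 1
      [SMOD Ideal.span {X ^ (2 * (min k (2 * n - k) + 1))}] := by
    have :=
      scaledGaussBinom_smodEq_one (Ideal.mem_span_singleton_self ((X : R⟦X⟧) ^ 2)) k (2 * n - k)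
    rwa [Ideal.span_singleton_pow, ← pow_mul] at this
  have hle := natAbs_sq_add_two_mul_min_le n k (by have := mem_range.1 hk; omega)
  simpa [mul_assoc] using SModEq.rfl.mul
    ((X_pow_mul_smodEq hG _).mono (Ideal.span_singleton_le_span_singleton.2 (pow_dvd_pow X hle)))

open scoped Classical in
theorem coeff_sum_Icc_X_pow_sq {n j : ℕ} (hj : j ≤ n) :
    coeff j (∑ d ∈ Icc 1 n, (X : R⟦X⟧) ^ (d ^ 2)) =
      if j ≠ 0 ∧ ∃ m : ℕ, j = m ^ 2 then 1 else 0 := by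
  simp only [map_sum, coeff_X_pow]
  split_ifs with h
  · obtain ⟨hj0, m, rfl⟩ := h
    have hm : m ∈ Icc 1 n :=
      mem_Icc.2 ⟨Nat.pos_of_ne_zero (by rintro rfl; simp at hj0),
        (Nat.le_self_pow two_ne_zero m).trans hj⟩
    rw [sum_eq_single_of_mem m hm fun d _ hd =>
      if_neg fun h => hd (Nat.pow_left_injective two_ne_zero h).symm, if_pos rfl]
  · refine sum_eq_zero fun d hd => if_neg fun hjd => h ⟨?_, d, hjd⟩
    rw [hjd]
    exact pow_ne_zero _ (by have := (mem_Icc.1 hd).1; omega)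

theorem qPochhammer_X_two_mul (n : ℕ) :
    qPochhammer (X : R⟦X⟧) X (2 * n) = qPochhammer X (X ^ 2) n * qPochhammer (X ^ 2) (X ^ 2) n := by
  induction n with
  | zero => simp [qPochhammer_zero]
  | succ n ih =>
    rw [show 2 * (n + 1) = 2 * n + 1 + 1 by ring, qPochhammer_succ, qPochhammer_succ, ih,
      qPochhammer_succ, qPochhammer_succ]
    ring

end CommRing

section Field

variable {K : Type*} [Field K]

theorem sum_neg_one_pow_mul_choose_mul_coeff_pow {B : K⟦X⟧} (hB : constantCoeff B = 1) (n : ℕ) :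
    ∑ j ∈ range (n + 1), (-1) ^ (n - j) * ((n + 1).choose (j + 1) : K) * coeff n (B ^ j) =
      (-1) ^ n * coeff n B⁻¹ := by
  set S : K⟦X⟧ := ∑ j ∈ range (n + 1), C ((-1) ^ (n - j) * ((n + 1).choose (j + 1) : K)) * B ^ j
  have hSB : S * B = (B - 1) ^ (n + 1) + (-1) ^ n := by
    simp only [S, sum_mul, mul_assoc, ← pow_succ, map_mul, map_pow, map_neg, map_one, map_natCast,
      ← sum_neg_one_pow_mul_choose_mul_pow_succ]
  have hsmall : (B - 1) ^ (n + 1) * B⁻¹ ≡ 0 [SMOD Ideal.span {X ^ (n + 1)}] := by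
    rw [SModEq.zero, Ideal.mem_span_singleton]
    have hX : X ∣ B - 1 := by rw [X_dvd_iff, map_sub, hB, map_one, sub_self]
    exact (pow_dvd_pow_of_dvd hX _).mul_right _
  have hS : S ≡ C ((-1) ^ n) * B⁻¹ [SMOD Ideal.span {X ^ (n + 1)}] := by
    have hBinv : B * B⁻¹ = 1 := PowerSeries.mul_inv_cancel _ (by simp [hB])
    calc S = (S * B) * B⁻¹ := by rw [mul_assoc, hBinv, mul_one]
      _ = (B - 1) ^ (n + 1) * B⁻¹ + C ((-1) ^ n) * B⁻¹ := by rw [hSB]; simp [add_mul]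
      _ ≡ 0 + C ((-1) ^ n) * B⁻¹ [SMOD Ideal.span {X ^ (n + 1)}] := hsmall.add SModEq.rfl
      _ = C ((-1) ^ n) * B⁻¹ := zero_add _
  rw [← coeff_C_mul, ← coeff_eq_of_smodEq hS n.lt_succ_self, map_sum]
  simp only [coeff_C_mul]

theorem coeff_eq_sum_of_rescale_mul_smodEq_one {f g : K⟦X⟧} {n : ℕ} (hg : constantCoeff g = 1)
    (h : rescale (-1) f * g ≡ 1 [SMOD Ideal.span {X ^ (n + 1)}]) :
    coeff n f =
      ∑ j ∈ range (n + 1), (-1) ^ (n - j) * ((n + 1).choose (j + 1) : K) * coeff n (g ^ j) := by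
  have hf : rescale (-1) f ≡ g⁻¹ [SMOD Ideal.span {X ^ (n + 1)}] := by
    have hginv : g * g⁻¹ = 1 := PowerSeries.mul_inv_cancel _ (by simp [hg])
    calc rescale (-1) f = rescale (-1) f * g * g⁻¹ := by rw [mul_assoc, hginv, mul_one]
      _ ≡ 1 * g⁻¹ [SMOD Ideal.span {X ^ (n + 1)}] := h.mul SModEq.rfl
      _ = g⁻¹ := one_mul _
  rw [sum_neg_one_pow_mul_choose_mul_coeff_pow hg, ← coeff_eq_of_smodEq hf n.lt_succ_self,
    coeff_rescale, ← mul_assoc, ← pow_add, Even.neg_one_pow ⟨n, rfl⟩, one_mul]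

theorem prod_Icc_one_add_X_pow_mul_inv_mul_qPochhammer_sq (n : ℕ) :
    (∏ j ∈ Icc 1 n, (1 + (X : K⟦X⟧) ^ j) * (1 - X ^ j)⁻¹) * qPochhammer X X n ^ 2 =
      qPochhammer (X ^ 2) (X ^ 2) n := by
  induction n with
  | zero => simp [qPochhammer_zero]
  | succ n ih =>
    have hinv : (1 - (X : K⟦X⟧) ^ (n + 1))⁻¹ * (1 - X ^ (n + 1)) = 1 :=
      PowerSeries.inv_mul_cancel _ (by simp)
    rw [prod_Icc_succ_top (by omega), qPochhammer_succ, qPochhammer_succ, ← ih]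
    linear_combination (∏ j ∈ Icc 1 n, (1 + (X : K⟦X⟧) ^ j) * (1 - X ^ j)⁻¹) *
      qPochhammer X X n ^ 2 * (1 + X ^ (n + 1)) * (1 - X ^ (n + 1)) * hinv

theorem constantCoeff_qPochhammer_X (n : ℕ) : constantCoeff (qPochhammer (X : K⟦X⟧) X n) = 1 := by
  simp [qPochhammer]

theorem constantCoeff_prod_Icc_one_add_X_pow_mul_inv (n : ℕ) :
    constantCoeff (∏ j ∈ Icc 1 n, (1 + (X : K⟦X⟧) ^ j) * (1 - X ^ j)⁻¹) = 1 := by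
  rw [map_prod]
  exact prod_eq_one fun j hj => by
    simp [zero_pow (show j ≠ 0 by have := (mem_Icc.1 hj).1; omega)]

end Field

theorem constantCoeff_thetaSeries : constantCoeff thetaSeries = 1 := by
  simp [← coeff_zero_eq_constantCoeff_apply, thetaSeries]

theorem thetaSeries_smodEq (n : ℕ) :
    thetaSeries ≡ 1 + 2 * ∑ d ∈ Icc 1 n, X ^ (d ^ 2) [SMOD Ideal.span {X ^ (n + 1)}] := by
  rw [SModEq.sub_mem, Ideal.mem_span_singleton, X_pow_dvd_iff]
  intro j hj
  rw [map_sub, map_add, coeff_one, ← map_ofNat C 2, coeff_C_mul,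
    coeff_sum_Icc_X_pow_sq (Nat.lt_succ_iff.1 hj), thetaSeries, coeff_mk]
  split_ifs <;> simp_all

theorem rescale_neg_one_thetaSeries_smodEq_sum (n : ℕ) :
    rescale (-1) thetaSeries ≡ 1 + 2 * ∑ d ∈ Icc 1 n, (-1) ^ d * X ^ (d ^ 2)
      [SMOD Ideal.span {X ^ (n + 1)}] := by
  have := rescale_smodEq (thetaSeries_smodEq n) (-1)
  rwa [map_add, map_one, map_mul, map_ofNat, map_sum,
    sum_congr rfl fun d _ => rescale_neg_one_X_pow_sq d] at this

theorem rescale_neg_one_thetaSeries_smodEq_qPochhammer (n : ℕ) :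
    rescale (-1) thetaSeries ≡
      qPochhammer (X : ℚ⟦X⟧) (X ^ 2) n ^ 2 * qPochhammer (X ^ 2) (X ^ 2) (2 * n)
      [SMOD Ideal.span {X ^ (n + 1)}] := by
  have h := sum_mul_scaledGaussBinom_smodEq (R := ℚ) n
  rw [← neg_one_pow_mul_qPochhammer_sq_mul_qPochhammer,
    sum_range_two_mul_add_one_neg_one_pow_mul (fun d => (X : ℚ⟦X⟧) ^ (d ^ 2))] at h
  have hsq : ((-1 : ℚ⟦X⟧) ^ n) * (-1) ^ n = 1 := by rw [← pow_add, Even.neg_one_pow ⟨n, rfl⟩]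
  calc rescale (-1) thetaSeries
      ≡ 1 + 2 * ∑ d ∈ Icc 1 n, (-1) ^ d * X ^ (d ^ 2) [SMOD Ideal.span {X ^ (n + 1)}] :=
        rescale_neg_one_thetaSeries_smodEq_sum n
    _ = (-1) ^ n * ((-1) ^ n * (X ^ (0 ^ 2) + 2 * ∑ d ∈ Icc 1 n, (-1) ^ d * X ^ (d ^ 2))) := by
        rw [← mul_assoc, hsq, one_mul, zero_pow two_ne_zero, pow_zero]
    _ ≡ (-1) ^ n * ((-1) ^ n * (qPochhammer X (X ^ 2) n ^ 2 * qPochhammer (X ^ 2) (X ^ 2) (2 * n)))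
        [SMOD Ideal.span {X ^ (n + 1)}] := SModEq.rfl.mul h.symm
    _ = _ := by rw [← mul_assoc, hsq, one_mul]

theorem rescale_neg_one_thetaSeries_mul_prod_smodEq_one (n : ℕ) :
    rescale (-1) thetaSeries * ∏ j ∈ Icc 1 n, (1 + (X : ℚ⟦X⟧) ^ j) * (1 - X ^ j)⁻¹ ≡ 1
      [SMOD Ideal.span {X ^ (n + 1)}] := by
  set F := ∏ j ∈ Icc 1 n, (1 + (X : ℚ⟦X⟧) ^ j) * (1 - X ^ j)⁻¹
  have hu : qPochhammer (X : ℚ⟦X⟧) X n ^ 2 * (qPochhammer X X n ^ 2)⁻¹ = 1 :=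
    PowerSeries.mul_inv_cancel _ (by simp [constantCoeff_qPochhammer_X])
  have hevens : qPochhammer (X ^ 2 : ℚ⟦X⟧) (X ^ 2) (n + n) ≡ qPochhammer (X ^ 2) (X ^ 2) n
      [SMOD Ideal.span {X ^ (n + 1)}] :=
    qPochhammer_add_smodEq (by rw [← pow_mul, ← pow_add]; exact X_pow_mem_span_X_pow (by omega)) n
  have hall : qPochhammer (X : ℚ⟦X⟧) X (n + n) ≡ qPochhammer X X n
      [SMOD Ideal.span {X ^ (n + 1)}] :=
    qPochhammer_add_smodEq (by rw [← pow_succ']; exact X_pow_mem_span_X_pow le_rfl) n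
  have hmain : rescale (-1) thetaSeries * F * qPochhammer X X n ^ 2 ≡ qPochhammer X X n ^ 2
      [SMOD Ideal.span {X ^ (n + 1)}] :=
    calc rescale (-1) thetaSeries * F * qPochhammer X X n ^ 2
        = rescale (-1) thetaSeries * qPochhammer (X ^ 2) (X ^ 2) n := by
          rw [mul_assoc, prod_Icc_one_add_X_pow_mul_inv_mul_qPochhammer_sq]
      _ ≡ qPochhammer X (X ^ 2) n ^ 2 * qPochhammer (X ^ 2) (X ^ 2) (n + n) *
            qPochhammer (X ^ 2) (X ^ 2) n [SMOD Ideal.span {X ^ (n + 1)}] := by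
          rw [← two_mul]; exact (rescale_neg_one_thetaSeries_smodEq_qPochhammer n).mul SModEq.rfl
      _ ≡ qPochhammer X (X ^ 2) n ^ 2 * qPochhammer (X ^ 2) (X ^ 2) n *
            qPochhammer (X ^ 2) (X ^ 2) n [SMOD Ideal.span {X ^ (n + 1)}] :=
          (SModEq.rfl.mul hevens).mul SModEq.rfl
      _ = qPochhammer X X (n + n) ^ 2 := by rw [← two_mul, qPochhammer_X_two_mul]; ring
      _ ≡ qPochhammer X X n ^ 2 [SMOD Ideal.span {X ^ (n + 1)}] := SModEq.pow 2 hall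
  calc rescale (-1) thetaSeries * F
      = rescale (-1) thetaSeries * F * qPochhammer X X n ^ 2 * (qPochhammer X X n ^ 2)⁻¹ := by
        rw [mul_assoc _ (qPochhammer X X n ^ 2), hu, mul_one]
    _ ≡ qPochhammer X X n ^ 2 * (qPochhammer X X n ^ 2)⁻¹ [SMOD Ideal.span {X ^ (n + 1)}] :=
        hmain.mul SModEq.rfl
    _ = 1 := hu

end PowerSeries

theorem sq_overpartition_transform_general (r : ℕ) (n : ℕ) :
    numSqReps r n =
      ∑ j ∈ Finset.range (n + 1),
        (-1 : ℚ) ^ (n - j) * ((n + 1).choose (j + 1) : ℚ) * overPart (r * j) n ∧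
    overPart r n =
      ∑ j ∈ Finset.range (n + 1),
        (-1 : ℚ) ^ (n - j) * ((n + 1).choose (j + 1) : ℚ) * numSqReps (r * j) n := by
  set F := ∏ j ∈ Icc 1 n, (1 + (X : ℚ⟦X⟧) ^ j) * (1 - X ^ j)⁻¹
  have key : rescale (-1) (thetaSeries ^ r) * F ^ r ≡ 1 [SMOD Ideal.span {X ^ (n + 1)}] := by
    simpa [map_pow, mul_pow] using SModEq.pow r (rescale_neg_one_thetaSeries_mul_prod_smodEq_one n)
  have hF : constantCoeff (F ^ r) = 1 := by
    rw [map_pow, constantCoeff_prod_Icc_one_add_X_pow_mul_inv, one_pow]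
  have hθ : constantCoeff (thetaSeries ^ r) = 1 := by
    rw [map_pow, constantCoeff_thetaSeries, one_pow]
  simp only [numSqReps, overPart, pow_mul]
  exact ⟨coeff_eq_sum_of_rescale_mul_smodEq_one hF key,
    coeff_eq_sum_of_rescale_mul_smodEq_one hθ (rescale_neg_one_mul_smodEq_one_symm key)⟩

/-- **Binomial transform between sums of squares and overpartitions**
(Proposition 6.7 of the paper). -/
theorem sq_overpartition_transform (r : ℕ) (hr : 1 ≤ r) (n : ℕ) :
    numSqReps r n =
      ∑ j ∈ Finset.range (n + 1),
        (-1 : ℚ) ^ (n - j) * ((n + 1).choose (j + 1) : ℚ) * overPart (r * j) n ∧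
    overPart r n =
      ∑ j ∈ Finset.range (n + 1),
        (-1 : ℚ) ^ (n - j) * ((n + 1).choose (j + 1) : ℚ) * numSqReps (r * j) n :=
  sq_overpartition_transform_general r n
end

section
/- Let α, β, t be complex numbers with α ≠ 0 and |t| < 1/(e·|α|). Then the series Σ_{n=1}^{∞} β·(αn+β)^{n−1}·t^n/n! converges absolutely; that is, the function n ↦ |β·(α(n+1)+β)^{n}·t^{n+1}/(n+1)!| is summable over n ∈ ℕ. -/
/-!
Since `n! ≥ (n/e)ⁿ` and `‖α(n+1)+β‖ ≤ (n+1)(‖α‖ + ‖β‖/(n+1))`, the `n`-th term is at most a constant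
times `qₙⁿ` with `qₙ = e‖t‖(‖α‖ + ‖β‖/(n+1)) → e‖t‖‖α‖ < 1`; such a series is dominated by a
geometric one.
-/

open Filter Topology Nat

theorem pow_div_exp_one_pow_le_factorial (n : ℕ) : ((n : ℝ) / Real.exp 1) ^ n ≤ n ! := by
  have h := Real.pow_div_factorial_le_exp (x := n) n.cast_nonneg' n
  rw [← Real.exp_one_pow, div_le_iff₀ (by positivity)] at h
  rwa [div_pow, div_le_iff₀ (by positivity), mul_comm]

theorem summable_pow_self_of_tendsto_lt_one {q : ℕ → ℝ} {l : ℝ} (hq : ∀ n, 0 ≤ q n)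
    (hl : l < 1) (h : Tendsto q atTop (𝓝 l)) : Summable fun n => q n ^ n := by
  obtain ⟨r, hlr, hr1⟩ := exists_between hl
  have hr0 : 0 ≤ r := (ge_of_tendsto' h hq).trans hlr.le
  refine (summable_geometric_of_lt_one hr0 hr1).of_norm_bounded_eventually ?_
  rw [Nat.cofinite_eq_atTop]
  filter_upwards [h.eventually (gt_mem_nhds hlr)] with n hn
  rw [Real.norm_of_nonneg (pow_nonneg (hq n) n)]
  exact pow_le_pow_left₀ (hq n) hn.le n

theorem norm_generalizedExp_term_le (α β t : ℂ) (n : ℕ) :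
    ‖β * (α * ((n : ℂ) + 1) + β) ^ n * t ^ (n + 1) / (((n + 1)! : ℂ))‖ ≤
      ‖β‖ * ‖t‖ * Real.exp 1 *
        (Real.exp 1 * ‖t‖ * (‖α‖ + ‖β‖ * (1 / ((n : ℝ) + 1)))) ^ n := by
  set E := Real.exp 1
  have hE : 0 < E := Real.exp_pos 1
  have hn : (0 : ℝ) < n + 1 := n.cast_add_one_pos
  set c := ‖α‖ + ‖β‖ * (1 / ((n : ℝ) + 1)) with hc_def
  have hX : ‖α * ((n : ℂ) + 1) + β‖ ≤ (n + 1) * c := by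
    refine (norm_add_le _ _).trans_eq ?_
    rw [norm_mul, ← Nat.cast_add_one, Complex.norm_natCast, Nat.cast_add_one, hc_def]
    field_simp
  have hfac : ((n + 1 : ℝ) / E) ^ (n + 1) ≤ (n + 1)! := by
    exact_mod_cast pow_div_exp_one_pow_le_factorial (n + 1)
  have hc : 0 ≤ c := by positivity
  clear_value c
  calc ‖β * (α * ((n : ℂ) + 1) + β) ^ n * t ^ (n + 1) / (((n + 1)! : ℂ))‖
      = ‖β‖ * ‖α * ((n : ℂ) + 1) + β‖ ^ n * ‖t‖ ^ (n + 1) / (n + 1)! := by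
        rw [norm_div, norm_mul, norm_mul, norm_pow, norm_pow, Complex.norm_natCast]
    _ ≤ ‖β‖ * ((n + 1) * c) ^ n * ‖t‖ ^ (n + 1) / ((n + 1 : ℝ) / E) ^ (n + 1) := by
        gcongr
    _ = ‖β‖ * ‖t‖ * E * (E * ‖t‖ * c) ^ n / (n + 1) := by
        rw [div_pow, mul_pow, mul_pow, pow_succ, pow_succ]
        field_simp
        ring
    _ ≤ ‖β‖ * ‖t‖ * E * (E * ‖t‖ * c) ^ n :=
        div_le_self (by positivity) (by linarith [n.cast_nonneg' (α := ℝ)])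

theorem generalized_exponential_summable_general (α β t : ℂ)
    (ht : ‖t‖ < 1 / (Real.exp 1 * ‖α‖)) :
    Summable fun n : ℕ =>
      ‖β * (α * ((n : ℂ) + 1) + β) ^ n * t ^ (n + 1) /
        (((n + 1).factorial : ℂ))‖ := by
  have hlt : Real.exp 1 * ‖t‖ * ‖α‖ < 1 := by
    rcases (norm_nonneg α).eq_or_lt with hα0 | hαpos
    · simp [← hα0]
    · rw [lt_div_iff₀ (by positivity)] at ht
      linarith
  have hq : Tendsto (fun n : ℕ => Real.exp 1 * ‖t‖ * (‖α‖ + ‖β‖ * (1 / ((n : ℝ) + 1))))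
      atTop (𝓝 (Real.exp 1 * ‖t‖ * ‖α‖)) := by
    simpa using (tendsto_one_div_add_atTop_nhds_zero_nat.const_mul ‖β‖).const_add ‖α‖
      |>.const_mul (Real.exp 1 * ‖t‖)
  exact Summable.of_nonneg_of_le (fun n => norm_nonneg _)
    (norm_generalizedExp_term_le α β t) ((summable_pow_self_of_tendsto_lt_one
      (fun n => by positivity) hlt hq).mul_left _)

/-- **Absolute convergence of the generalized exponential series.**
For complex `α ≠ 0`, `β`, and `|t| < 1/(e|α|)`, the series
`Σ_{n≥1} β(αn+β)^{n−1} tⁿ/n!` converges absolutely. -/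
theorem generalized_exponential_summable (α β t : ℂ) (hα : α ≠ 0)
    (ht : ‖t‖ < 1 / (Real.exp 1 * ‖α‖)) :
    Summable fun n : ℕ =>
      ‖β * (α * ((n : ℂ) + 1) + β) ^ n * t ^ (n + 1) /
        (((n + 1).factorial : ℂ))‖ :=
  generalized_exponential_summable_general α β t ht
end
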